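/- arXiv:1909.05420 — 2 statements merged into one kernel-verified Lean document; each statement's English description precedes it below -/
import Mathlib

section
/- Let R be an n×n correlation matrix, r_2 = sqrt((∑_{i≠j} r_{ij}²)/(n(n-1))), and R̄ the matrix with unit diagonal and all off-diagonal entries equal to -r_2. Then det R̄ ≤ det R. -/
/-!
The eigenvalues `μ` of `R` are nonnegative, with `∑ μ = n` and `∑ μ² = n + n (n - 1) r₂²`: the
same first two moments as the spectrum `(a, …, a, b)` of `R̄`, where `a = 1 + r₂` and
`b = 1 - (n - 1) r₂`. If `b ≤ 0` then `det R̄ ≤ 0 ≤ det R`. Otherwise the moment identities force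
`b ≤ μ i` for all `i`, and on `[b, ∞)` the logarithm lies above the quadratic `q` that is tangent
to it at `a` and meets it at `b`. Since `q` is quadratic, `∑ q (μ i) = (n - 1) q a + q b`, whence
`∑ log μ i ≥ (n - 1) log a + log b`.
-/

open Set Matrix

theorem sub_one_sub_mul_sq_le_log {β κ s : ℝ} (hβ : 0 < β) (hβ1 : β < 1)
    (hκ : Real.log β = (β - 1) - κ * (β - 1) ^ 2) (hs : β ≤ s) :
    (s - 1) - κ * (s - 1) ^ 2 ≤ Real.log s := by
  set φ : ℝ → ℝ := fun t ↦ Real.log t - ((t - 1) - κ * (t - 1) ^ 2)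
  suffices 0 ≤ φ s by simp only [φ] at this; linarith
  have hφ' : ∀ t, 0 < t → HasDerivAt φ ((t - 1) * (2 * κ * t - 1) / t) t := by
    intro t ht
    have h := (Real.hasDerivAt_log ht.ne').sub (((hasDerivAt_id t).sub_const 1).sub
      ((((hasDerivAt_id t).sub_const 1).pow 2).const_mul κ))
    refine h.congr_deriv ?_
    simp only [id, Nat.cast_ofNat]
    field_simp
    ring
  have hcont : ContinuousOn φ (Ioi 0) := fun t ht ↦ (hφ' t ht).continuousAt.continuousWithinAt
  have hφβ : φ β = 0 := by simp only [φ]; linarith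
  have hφ1 : φ 1 = 0 := by simp [φ]
  -- Rolle locates the second critical point `t₀ = 1 / (2κ)` strictly between `β` and `1`.
  obtain ⟨t₀, ⟨hβt₀, ht₀1⟩, hcrit⟩ := exists_hasDerivAt_eq_zero hβ1
    (hcont.mono fun t ht ↦ hβ.trans_le ht.1) (hφβ.trans hφ1.symm)
    fun t ht ↦ hφ' t (hβ.trans ht.1)
  have ht₀ : 0 < t₀ := hβ.trans hβt₀
  have hκt₀ : 2 * κ * t₀ = 1 := by
    rw [div_eq_zero_iff, mul_eq_zero, sub_eq_zero, sub_eq_zero] at hcrit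
    exact (hcrit.resolve_right ht₀.ne').resolve_left ht₀1.ne
  have hκpos : 0 < κ := by nlinarith
  have hderiv : ∀ D ⊆ Ioi 0, ∀ t ∈ interior D,
      HasDerivWithinAt φ ((t - 1) * (2 * κ * t - 1) / t) (interior D) t :=
    fun D hD t ht ↦ (hφ' t (hD (interior_subset ht))).hasDerivWithinAt
  have hmono₁ : MonotoneOn φ (Icc β t₀) := by
    have hD : Icc β t₀ ⊆ Ioi 0 := fun t ht ↦ hβ.trans_le ht.1
    refine monotoneOn_of_hasDerivWithinAt_nonneg (convex_Icc _ _) (hcont.mono hD)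
      (hderiv _ hD) fun t ht ↦ ?_
    rw [interior_Icc] at ht
    exact div_nonneg (mul_nonneg_of_nonpos_of_nonpos (by linarith [ht.2]) (by nlinarith [ht.2]))
      (hD (Ioo_subset_Icc_self ht)).le
  have hanti : AntitoneOn φ (Icc t₀ 1) := by
    have hD : Icc t₀ 1 ⊆ Ioi 0 := fun t ht ↦ ht₀.trans_le ht.1
    refine antitoneOn_of_hasDerivWithinAt_nonpos (convex_Icc _ _) (hcont.mono hD)
      (hderiv _ hD) fun t ht ↦ ?_
    rw [interior_Icc] at ht
    exact div_nonpos_of_nonpos_of_nonneg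
      (mul_nonpos_of_nonpos_of_nonneg (by linarith [ht.2]) (by nlinarith [ht.1]))
      (hD (Ioo_subset_Icc_self ht)).le
  have hmono₂ : MonotoneOn φ (Ici 1) := by
    have hD : Ici (1 : ℝ) ⊆ Ioi 0 := Ici_subset_Ioi.2 one_pos
    refine monotoneOn_of_hasDerivWithinAt_nonneg (convex_Ici _) (hcont.mono hD)
      (hderiv _ hD) fun t ht ↦ ?_
    rw [interior_Ici, mem_Ioi] at ht
    exact div_nonneg (mul_nonneg (by linarith) (by nlinarith)) (by linarith)
  rcases le_total s t₀ with hst₀ | ht₀s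
  · exact hφβ ▸ hmono₁ ⟨le_rfl, hβt₀.le⟩ ⟨hs, hst₀⟩ hs
  rcases le_total s 1 with hs1 | h1s
  · exact hφ1 ▸ hanti ⟨ht₀s, hs1⟩ ⟨ht₀1.le, le_rfl⟩ hs1
  · exact hφ1 ▸ hmono₂ self_mem_Ici h1s h1s

theorem le_prod_of_sum_sub_one_eq {ι : Type*} [Fintype ι] {x : ι → ℝ} {β : ℝ} (hβ : 0 < β)
    (hβ1 : β ≤ 1) (h1 : ∑ i, (x i - 1) = β - 1) (h2 : ∑ i, (x i - 1) ^ 2 = (β - 1) ^ 2) :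
    β ≤ ∏ i, x i := by
  have hsq : ∀ i, (x i - 1) ^ 2 ≤ (β - 1) ^ 2 := fun i ↦
    h2 ▸ Finset.single_le_sum (fun j _ ↦ sq_nonneg (x j - 1)) (Finset.mem_univ i)
  rcases hβ1.lt_or_eq with hβ1 | rfl
  · have hβx : ∀ i, β ≤ x i := fun i ↦ by nlinarith [hsq i]
    obtain ⟨κ, hκ⟩ : ∃ κ, Real.log β = (β - 1) - κ * (β - 1) ^ 2 :=
      ⟨(β - 1 - Real.log β) / (β - 1) ^ 2, by field_simp [(sub_neg.2 hβ1).ne]; ring⟩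
    have hlog : Real.log β ≤ ∑ i, Real.log (x i) := calc
      Real.log β = (β - 1) - κ * (β - 1) ^ 2 := hκ
      _ = ∑ i, ((x i - 1) - κ * (x i - 1) ^ 2) := by
        rw [Finset.sum_sub_distrib, ← Finset.mul_sum, h1, h2]
      _ ≤ ∑ i, Real.log (x i) :=
        Finset.sum_le_sum fun i _ ↦ sub_one_sub_mul_sq_le_log hβ hβ1 hκ (hβx i)
    have hx : ∀ i, 0 < x i := fun i ↦ hβ.trans_le (hβx i)
    rw [← Real.log_prod fun i _ ↦ (hx i).ne'] at hlog
    exact (Real.log_le_log_iff hβ (Finset.prod_pos fun i _ ↦ hx i)).1 hlog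
  · have hx : ∀ i, x i = 1 := fun i ↦ by nlinarith [hsq i, sq_nonneg (x i - 1)]
    simp [hx]

theorem pow_mul_le_prod_of_sum_eq_of_sum_sq_eq {n : ℕ} {x : Fin (n + 1) → ℝ} {a b : ℝ}
    (hb : 0 < b) (hba : b ≤ a) (h1 : ∑ i, x i = n * a + b) (h2 : ∑ i, x i ^ 2 = n * a ^ 2 + b ^ 2) :
    a ^ n * b ≤ ∏ i, x i := by
  have ha : 0 < a := hb.trans_le hba
  have key := le_prod_of_sum_sub_one_eq (x := fun i ↦ x i / a) (div_pos hb ha)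
    ((div_le_one ha).2 hba) ?_ ?_
  · rw [Finset.prod_div_distrib, Finset.prod_const, Finset.card_univ, Fintype.card_fin] at key
    calc a ^ n * b = a ^ (n + 1) * (b / a) := by field_simp; ring
      _ ≤ a ^ (n + 1) * ((∏ i, x i) / a ^ (n + 1)) := by gcongr
      _ = ∏ i, x i := by field_simp
  · simp only [Finset.sum_sub_distrib, ← Finset.sum_div, h1, Finset.sum_const, Finset.card_univ,
      Fintype.card_fin, nsmul_eq_mul]
    field_simp
    push_cast
    ring
  · have hsq : ∀ i, (x i / a - 1) ^ 2 = x i ^ 2 / a ^ 2 - 2 / a * x i + 1 := fun i ↦ by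
      field_simp
      ring
    simp only [hsq, Finset.sum_add_distrib, Finset.sum_sub_distrib, ← Finset.sum_div,
      ← Finset.mul_sum, h1, h2, Finset.sum_const, Finset.card_univ, Fintype.card_fin, nsmul_eq_mul]
    field_simp
    push_cast
    ring

def equicorrelation (n : ℕ) (ρ : ℝ) : Matrix (Fin n) (Fin n) ℝ :=
  of fun i j ↦ if i = j then 1 else ρ

theorem det_equicorrelation (n : ℕ) (ρ : ℝ) :
    (equicorrelation (n + 1) ρ).det = (1 - ρ) ^ n * (1 + n * ρ) := by
  suffices h : (fun ρ ↦ (equicorrelation (n + 1) ρ).det) = fun ρ : ℝ ↦ (1 - ρ) ^ n * (1 + n * ρ)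
    from congrFun h ρ
  refine Continuous.ext_on (dense_compl_singleton 1) ?_ (by fun_prop) fun ρ hρ ↦ ?_
  · refine Continuous.matrix_det (continuous_matrix fun i j ↦ ?_)
    simp only [equicorrelation, of_apply]
    split_ifs <;> fun_prop
  have hρ : 1 - ρ ≠ 0 := sub_ne_zero.2 (Ne.symm hρ)
  have : equicorrelation (n + 1) ρ = (1 - ρ) • (1 +
      replicateCol Unit (fun _ : Fin (n + 1) ↦ (1 : ℝ)) * replicateRow Unit (fun _ ↦ ρ / (1 - ρ))) := by
    ext i j
    by_cases hij : i = j
    · simp [equicorrelation, hij, Matrix.mul_apply]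
      field_simp
      ring
    · simp [equicorrelation, hij, Matrix.mul_apply]
      field_simp
  rw [this, det_smul, det_one_add_replicateCol_mul_replicateRow]
  simp only [Fintype.card_fin, dotProduct, mul_one, Finset.sum_const, Finset.card_univ,
    nsmul_eq_mul, Nat.cast_add, Nat.cast_one]
  field_simp
  ring

theorem Matrix.IsHermitian.sum_eigenvalues_sq {ι : Type*} [Fintype ι] [DecidableEq ι]
    {A : Matrix ι ι ℝ} (hA : A.IsHermitian) :
    ∑ i, hA.eigenvalues i ^ 2 = ∑ i, ∑ j, A i j ^ 2 := by
  have hsymm : ∀ i j, A j i = A i j := fun i j ↦ by simpa using congrFun (congrFun hA i) j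
  calc ∑ i, hA.eigenvalues i ^ 2 = (A * A).trace := by
        conv_rhs => rw [hA.spectral_theorem, ← map_mul, Unitary.conjStarAlgAut_apply,
          trace_mul_cycle, Unitary.coe_star_mul_self, one_mul, diagonal_mul_diagonal,
          trace_diagonal]
        simp [sq]
    _ = ∑ i, ∑ j, A i j ^ 2 := by simp [trace, Matrix.mul_apply, hsymm, sq]

theorem Matrix.IsHermitian.sum_eigenvalues_sq_of_diag_eq_one {ι : Type*} [Fintype ι]
    [DecidableEq ι] {A : Matrix ι ι ℝ} (hA : A.IsHermitian) (hdiag : ∀ i, A i i = 1) :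
    ∑ i, hA.eigenvalues i ^ 2 = Fintype.card ι + ∑ i, ∑ j ∈ Finset.univ.erase i, A i j ^ 2 := by
  rw [hA.sum_eigenvalues_sq, ← Finset.card_univ, Finset.card_eq_sum_ones, Nat.cast_sum,
    ← Finset.sum_add_distrib]
  refine Finset.sum_congr rfl fun i _ ↦ ?_
  rw [← Finset.add_sum_erase _ _ (Finset.mem_univ i), hdiag, one_pow, Nat.cast_one]

theorem det_Rbar_le_det (n : ℕ) (hn : 2 ≤ n) (R : Matrix (Fin n) (Fin n) ℝ)
    (hpsd : R.PosSemidef) (hdiag : ∀ i, R i i = 1)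
    (r₂ : ℝ)
    (hr₂ : r₂ = Real.sqrt ((∑ i, ∑ j ∈ Finset.univ.erase i, (R i j) ^ 2) / (n * (n - 1))))
    (Rbar : Matrix (Fin n) (Fin n) ℝ)
    (hRbar : Rbar = Matrix.of fun i j => if i = j then 1 else -r₂) :
    Rbar.det ≤ R.det := by
  obtain ⟨k, rfl⟩ : ∃ k, n = k + 1 := ⟨n - 1, by omega⟩
  have hk : (k : ℝ) ≠ 0 := by exact_mod_cast (by omega : k ≠ 0)
  have hr₂0 : 0 ≤ r₂ := hr₂ ▸ Real.sqrt_nonneg _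
  set S := ∑ i, ∑ j ∈ Finset.univ.erase i, R i j ^ 2
  have hS : S = (k + 1) * k * r₂ ^ 2 := by
    have hS0 : 0 ≤ S := by positivity
    push_cast at hr₂
    rw [hr₂, add_sub_cancel_right, Real.sq_sqrt (div_nonneg hS0 (by positivity))]
    field_simp
  have hdetRbar : Rbar.det = (1 + r₂) ^ k * (1 - k * r₂) := by
    rw [hRbar, ← neg_neg r₂, ← equicorrelation, det_equicorrelation]
    ring
  rcases le_or_gt (1 - k * r₂) 0 with hb | hb
  · exact hdetRbar ▸ (mul_nonpos_of_nonneg_of_nonpos (by positivity) hb).trans hpsd.det_nonneg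
  set μ := hpsd.1.eigenvalues
  have hdet : R.det = ∏ i, μ i := by simpa using hpsd.1.det_eq_prod_eigenvalues
  have hμ1 : ∑ i, μ i = k + 1 := by
    simpa [trace, hdiag] using hpsd.1.trace_eq_sum_eigenvalues.symm
  have hμ2 : ∑ i, μ i ^ 2 = (k + 1) + S := by
    rw [hpsd.1.sum_eigenvalues_sq_of_diag_eq_one hdiag, Fintype.card_fin, Nat.cast_succ]
  rw [hdetRbar, hdet]
  refine pow_mul_le_prod_of_sum_eq_of_sum_sq_eq hb ?_ ?_ ?_
  · nlinarith
  · rw [hμ1]; ring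
  · rw [hμ2, hS]; ring
end

section
/- Let R be an n×n correlation matrix and, for 1 < p ≤ 2, define r_p = ((∑_{i≠j} |r_{ij}|^p)/(n(n-1)))^{1/p}. Then det R ≤ (1-r_p)^{n-1}(1+(n-1)r_p). -/
/-!
Let `λ` be the eigenvalues of `R`. Then `∑ λᵢ = n` and `∑ λᵢ² = tr R² = n + n(n-1) r₂²`.
Among nonnegative vectors with these two moments the product is largest at
`(a, …, a, b)` with `a = 1 - r₂`, `b = 1 + (n-1) r₂`: after dividing by `a`, sum over `i` the bound
`log y ≤ y - 1 + C (y-1)²`, where the right side is the quadratic that touches `log` at `1` and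
meets it again at `t = b / a`; the two moment conditions turn the sum of the right sides into
`log t`. Hence `det R ≤ f(r₂)`, and `f(r₂) ≤ f(r_p)` since `f` is decreasing on `[0, 1]` and
`r_p ≤ r₂` by the power mean inequality.
-/

open Real

section Calculus

open Set

theorem monotoneOn_Icc_of_hasDerivAt_nonneg {f f' : ℝ → ℝ} {u v : ℝ}
    (hf : ∀ x ∈ Icc u v, HasDerivAt f (f' x) x) (hf' : ∀ x ∈ Ioo u v, 0 ≤ f' x) :
    MonotoneOn f (Icc u v) :=
  monotoneOn_of_hasDerivWithinAt_nonneg (convex_Icc u v)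
    (fun x hx => (hf x hx).continuousAt.continuousWithinAt)
    (fun x hx => (hf x (interior_subset hx)).hasDerivWithinAt) (by rwa [interior_Icc])

theorem antitoneOn_Icc_of_hasDerivAt_nonpos {f f' : ℝ → ℝ} {u v : ℝ}
    (hf : ∀ x ∈ Icc u v, HasDerivAt f (f' x) x) (hf' : ∀ x ∈ Ioo u v, f' x ≤ 0) :
    AntitoneOn f (Icc u v) :=
  antitoneOn_of_hasDerivWithinAt_nonpos (convex_Icc u v)
    (fun x hx => (hf x hx).continuousAt.continuousWithinAt)
    (fun x hx => (hf x (interior_subset hx)).hasDerivWithinAt) (by rwa [interior_Icc])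

theorem strictMonoOn_Icc_of_hasDerivAt_pos {f f' : ℝ → ℝ} {u v : ℝ}
    (hf : ∀ x ∈ Icc u v, HasDerivAt f (f' x) x) (hf' : ∀ x ∈ Ioo u v, 0 < f' x) :
    StrictMonoOn f (Icc u v) :=
  strictMonoOn_of_hasDerivWithinAt_pos (convex_Icc u v)
    (fun x hx => (hf x hx).continuousAt.continuousWithinAt)
    (fun x hx => (hf x (interior_subset hx)).hasDerivWithinAt) (by rwa [interior_Icc])

theorem log_le_sub_one_add_mul_sq {t C : ℝ} (ht : 1 < t) (hC : log t = t - 1 + C * (t - 1) ^ 2)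
    {y : ℝ} (hy : 0 < y) (hyt : y ≤ t) : log y ≤ y - 1 + C * (y - 1) ^ 2 := by
  set g : ℝ → ℝ := fun x => log x - (x - 1 + C * (x - 1) ^ 2)
  set k : ℝ → ℝ := fun x => -(x⁻¹ + 2 * C)
  -- `g' = (x - 1) * k x` with `k` increasing, so `g` rises, falls, and rises again on `(0, t]`;
  -- as `g 1 = g t = 0`, it is nonpositive there.
  have hk : ∀ x x', 0 < x → x ≤ x' → k x ≤ k x' := fun x x' hx hxx' => by
    simp only [k, neg_le_neg_iff, add_le_add_iff_right]
    exact inv_anti₀ hx hxx'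
  have hg : ∀ u v, 0 < u → ∀ x ∈ Icc u v, HasDerivAt g ((x - 1) * k x) x := fun u v hu x hx => by
    have hx : 0 < x := hu.trans_le hx.1
    have h : HasDerivAt g (x⁻¹ - (1 + C * (2 * (x - 1) ^ 1 * 1))) x :=
      (hasDerivAt_log hx.ne').sub
        (((hasDerivAt_id x).sub_const 1).add ((((hasDerivAt_id x).sub_const 1).pow 2).const_mul C))
    exact h.congr_deriv (by simp only [k]; field_simp; ring)
  have hg1 : g 1 = 0 := by simp [g]
  have hgt : g t = 0 := by simp only [g, hC]; ring
  have hk1 : k 1 ≤ 0 := by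
    by_contra! h
    have := strictMonoOn_Icc_of_hasDerivAt_pos (hg 1 t one_pos) fun x hx =>
      mul_pos (sub_pos.2 hx.1) (h.trans_le (hk 1 x one_pos hx.1.le))
    exact (this (left_mem_Icc.2 ht.le) (right_mem_Icc.2 ht.le) ht).ne (hg1.trans hgt.symm)
  suffices g y ≤ 0 by simp only [g] at this; linarith
  rcases le_total y 1 with hy1 | hy1
  · have := monotoneOn_Icc_of_hasDerivAt_nonneg (hg y 1 hy) fun x hx =>
      mul_nonneg_of_nonpos_of_nonpos (by linarith [hx.2])
        ((hk x 1 (hy.trans hx.1) hx.2.le).trans hk1)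
    exact (this (left_mem_Icc.2 hy1) (right_mem_Icc.2 hy1) hy1).trans hg1.le
  rcases le_total (k y) 0 with hky | hky
  · have := antitoneOn_Icc_of_hasDerivAt_nonpos (hg 1 y one_pos) fun x hx =>
      mul_nonpos_of_nonneg_of_nonpos (by linarith [hx.1])
        ((hk x y (one_pos.trans hx.1) hx.2.le).trans hky)
    exact (this (left_mem_Icc.2 hy1) (right_mem_Icc.2 hy1) hy1).trans hg1.le
  · have := monotoneOn_Icc_of_hasDerivAt_nonneg (hg y t hy) fun x hx =>
      mul_nonneg (by linarith [hx.1]) (hky.trans (hk y x hy hx.1.le))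
    exact (this (left_mem_Icc.2 hyt) (right_mem_Icc.2 hyt) hyt).trans hgt.le

/-- The determinant of the `n × n` matrix with unit diagonal and all off-diagonal entries `t`. -/
def equicorrelationDet (n : ℕ) (t : ℝ) : ℝ := (1 - t) ^ (n - 1) * (1 + (n - 1 : ℝ) * t)

theorem antitoneOn_equicorrelationDet (n : ℕ) : AntitoneOn (equicorrelationDet n) (Icc 0 1) := by
  rcases n with _ | _ | m
  · intro s _ t _ hst
    simp only [equicorrelationDet, Nat.zero_sub, pow_zero, one_mul, Nat.cast_zero, zero_sub,
      neg_one_mul]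
    linarith
  · intro s _ t _ _
    simp [equicorrelationDet]
  have hf : equicorrelationDet (m + 2) = fun t : ℝ => (1 - t) ^ (m + 1) * (1 + (m + 1) * t) := by
    ext t
    simp only [equicorrelationDet]
    push_cast
    ring
  rw [hf]
  refine antitoneOn_Icc_of_hasDerivAt_nonpos
    (f' := fun t => -((m + 1) * (m + 2) * t * (1 - t) ^ m)) (fun t _ => ?_) fun t ht => ?_
  · have h := (((hasDerivAt_id t).const_sub 1).pow (m + 1)).mul
      (((hasDerivAt_id t).const_mul ((m : ℝ) + 1)).const_add 1)
    refine h.congr_deriv ?_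
    simp only [id, Nat.add_sub_cancel, Pi.pow_apply]
    push_cast
    ring
  · have : 0 ≤ (1 - t) ^ m := pow_nonneg (by linarith [ht.2]) m
    have := ht.1.le
    simp only [neg_nonpos]
    positivity

end Calculus

section Moments

open Finset

theorem Finset.sum_sq_lt_sq_sum_of_pos {ι : Type*} {s : Finset ι} {f : ι → ℝ} (hs : 1 < #s)
    (hf : ∀ i ∈ s, 0 < f i) : ∑ i ∈ s, f i ^ 2 < (∑ i ∈ s, f i) ^ 2 := by
  rw [sq (∑ i ∈ s, f i), sum_mul]
  refine sum_lt_sum_of_nonempty (card_pos.1 (by omega)) fun i hi => ?_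
  obtain ⟨j, hj, hji⟩ := exists_mem_ne hs i
  rw [sq]
  exact mul_lt_mul_of_pos_left (single_lt_sum hji hi hj (hf j hj) fun k hk _ => (hf k hk).le)
    (hf i hi)

theorem prod_le_of_sum_sub_one_sq_eq {ι : Type*} [Fintype ι] {y : ι → ℝ} {t : ℝ}
    (hy : ∀ i, 0 ≤ y i) (ht : 1 ≤ t) (h₁ : ∑ i, (y i - 1) = t - 1)
    (h₂ : ∑ i, (y i - 1) ^ 2 = (t - 1) ^ 2) : ∏ i, y i ≤ t := by
  have hyt : ∀ i, y i ≤ t := fun i => by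
    have : (y i - 1) ^ 2 ≤ (t - 1) ^ 2 :=
      h₂ ▸ single_le_sum (fun j _ => sq_nonneg (y j - 1)) (mem_univ i)
    nlinarith
  rcases ht.eq_or_lt with rfl | ht
  · exact prod_le_one (fun i _ => hy i) fun i _ => hyt i
  by_cases h₀ : ∃ i, y i = 0
  · obtain ⟨i, hi⟩ := h₀
    rw [prod_eq_zero (mem_univ i) hi]
    linarith
  push Not at h₀
  have hpos : ∀ i, 0 < y i := fun i => (hy i).lt_of_ne' (h₀ i)
  set C := (log t - (t - 1)) / (t - 1) ^ 2
  have hC : log t = t - 1 + C * (t - 1) ^ 2 := by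
    rw [div_mul_cancel₀ _ (pow_ne_zero 2 (sub_pos.2 ht).ne')]
    ring
  rw [← log_le_log_iff (prod_pos fun i _ => hpos i) (by linarith),
    log_prod fun i _ => (hpos i).ne']
  calc ∑ i, log (y i) ≤ ∑ i, (y i - 1 + C * (y i - 1) ^ 2) :=
        sum_le_sum fun i _ => log_le_sub_one_add_mul_sq ht hC (hpos i) (hyt i)
    _ = log t := by rw [sum_add_distrib, ← mul_sum, h₁, h₂, hC]

theorem prod_le_equicorrelationDet_of_lt_one {n : ℕ} {x : Fin n → ℝ} {r : ℝ} (hn : 1 ≤ n)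
    (hx : ∀ i, 0 ≤ x i) (hr : 0 ≤ r) (hr₁ : r < 1) (h₁ : ∑ i, x i = n)
    (h₂ : ∑ i, x i ^ 2 = n + n * (n - 1) * r ^ 2) :
    ∏ i, x i ≤ equicorrelationDet n r := by
  obtain ⟨m, rfl⟩ : ∃ m, n = m + 1 := ⟨n - 1, by omega⟩
  rw [equicorrelationDet, Nat.add_sub_cancel, Nat.cast_add_one, add_sub_cancel_right]
  push_cast at h₁ h₂
  have ha : 0 < 1 - r := sub_pos.2 hr₁
  have ht : 1 ≤ (1 + m * r) / (1 - r) := by rw [one_le_div ha]; nlinarith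
  have hy₁ : ∑ i, (x i / (1 - r) - 1) = (1 + m * r) / (1 - r) - 1 := by
    rw [sum_sub_distrib, ← sum_div, h₁]
    field_simp
    simp only [sum_const, card_univ, Fintype.card_fin, nsmul_eq_mul, Nat.cast_add_one]
    ring
  have hy₂ : ∑ i, (x i / (1 - r) - 1) ^ 2 = ((1 + m * r) / (1 - r) - 1) ^ 2 := by
    have : ∀ i, (x i / (1 - r) - 1) ^ 2 =
        (x i ^ 2 - 2 * (1 - r) * x i + (1 - r) ^ 2) / (1 - r) ^ 2 := fun i => by
      field_simp
      ring
    simp only [this, ← sum_div, sum_add_distrib, sum_sub_distrib, ← mul_sum, h₁, h₂, sum_const,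
      card_univ, Fintype.card_fin, nsmul_eq_mul]
    field_simp
    push_cast
    ring
  calc ∏ i, x i = (1 - r) ^ (m + 1) * ∏ i, (x i / (1 - r)) := by
        rw [prod_div_distrib, prod_const, card_univ, Fintype.card_fin]
        field_simp
    _ ≤ (1 - r) ^ (m + 1) * ((1 + m * r) / (1 - r)) := by
        gcongr
        exact prod_le_of_sum_sub_one_sq_eq (fun i => div_nonneg (hx i) ha.le) ht hy₁ hy₂
    _ = (1 - r) ^ m * (1 + m * r) := by
        rw [pow_succ]
        field_simp

theorem prod_le_equicorrelationDet {n : ℕ} {x : Fin n → ℝ} {r : ℝ} (hn : 2 ≤ n)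
    (hx : ∀ i, 0 ≤ x i) (hr : 0 ≤ r) (h₁ : ∑ i, x i = n)
    (h₂ : ∑ i, x i ^ 2 = n + n * (n - 1) * r ^ 2) :
    ∏ i, x i ≤ equicorrelationDet n r := by
  have hn' : (1 : ℝ) ≤ n - 1 := by
    have : (2 : ℝ) ≤ n := by exact_mod_cast hn
    linarith
  have hN : 0 < (n : ℝ) * (n - 1) := by positivity
  by_cases h₀ : ∃ i, x i = 0
  · obtain ⟨i, hi⟩ := h₀
    have hsq := sum_sq_le_sq_sum_of_nonneg (s := univ) fun i _ => hx i
    rw [h₁, h₂] at hsq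
    have hr₁ : r ≤ 1 := (sq_le_one_iff₀ hr).1 (le_of_mul_le_mul_left (by linarith) hN)
    rw [prod_eq_zero (mem_univ i) hi, equicorrelationDet]
    have : 0 ≤ 1 - r := by linarith
    positivity
  push Not at h₀
  have hsq := sum_sq_lt_sq_sum_of_pos (s := univ)
    (by simp only [card_univ, Fintype.card_fin]; omega) fun i _ => (hx i).lt_of_ne' (h₀ i)
  rw [h₁, h₂] at hsq
  have hr₁ : r < 1 := (sq_lt_one_iff₀ hr).1 (lt_of_mul_lt_mul_left (by linarith) hN.le)
  exact prod_le_equicorrelationDet_of_lt_one (by omega) hx hr hr₁ h₁ h₂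

theorem rpow_mean_le_rpow_mean {ι : Type*} (s : Finset ι) {z : ι → ℝ} (hz : ∀ i ∈ s, 0 ≤ z i)
    {p q : ℝ} (hp : 0 < p) (hpq : p ≤ q) :
    ((∑ i ∈ s, z i ^ p) / #s) ^ (1 / p) ≤ ((∑ i ∈ s, z i ^ q) / #s) ^ (1 / q) := by
  have hq : 0 < q := hp.trans_le hpq
  rcases s.eq_empty_or_nonempty with rfl | hs
  · simp [hp.ne', hq.ne']
  have hw : ∑ _i ∈ s, (#s : ℝ)⁻¹ = 1 := by simp [hs.card_pos.ne']
  have hmean : ∀ f : ι → ℝ, ∑ i ∈ s, (#s : ℝ)⁻¹ * f i = (∑ i ∈ s, f i) / #s := fun f => by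
    rw [← mul_sum, inv_mul_eq_div]
  have jensen := rpow_arith_mean_le_arith_mean_rpow s _ (fun i => z i ^ p)
    (fun _ _ => by positivity) hw (fun i hi => rpow_nonneg (hz i hi) p) ((one_le_div hp).2 hpq)
  have hzq : ∀ i ∈ s, (z i ^ p) ^ (q / p) = z i ^ q := fun i hi => by
    rw [← rpow_mul (hz i hi), mul_div_cancel₀ _ hp.ne']
  rw [hmean, hmean, sum_congr rfl hzq] at jensen
  have hmean_nonneg : 0 ≤ (∑ i ∈ s, z i ^ p) / #s :=
    div_nonneg (sum_nonneg fun i hi => rpow_nonneg (hz i hi) p) (Nat.cast_nonneg _)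
  calc ((∑ i ∈ s, z i ^ p) / #s) ^ (1 / p)
      = (((∑ i ∈ s, z i ^ p) / #s) ^ (q / p)) ^ (1 / q) := by
        rw [← rpow_mul hmean_nonneg]
        field_simp
    _ ≤ ((∑ i ∈ s, z i ^ q) / #s) ^ (1 / q) :=
        rpow_le_rpow (rpow_nonneg hmean_nonneg _) jensen (by positivity)

end Moments

section CorrelationMatrix

open Finset Matrix

theorem Matrix.IsHermitian.trace_pow_eq_sum_eigenvalues_pow {𝕜 ι : Type*} [RCLike 𝕜] [Fintype ι]
    [DecidableEq ι] {A : Matrix ι ι 𝕜} (hA : A.IsHermitian) (k : ℕ) :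
    (A ^ k).trace = ∑ i, (hA.eigenvalues i : 𝕜) ^ k := by
  conv_lhs => rw [hA.spectral_theorem, ← map_pow, Unitary.conjStarAlgAut_apply, trace_mul_cycle,
    Unitary.coe_star_mul_self, Matrix.one_mul, diagonal_pow, trace_diagonal]
  simp

theorem natCast_mul_sub_one_nonneg (n : ℕ) : (0 : ℝ) ≤ n * (n - 1) := by
  rcases n with _ | n
  · simp
  · rw [Nat.cast_add_one, add_sub_cancel_right]
    positivity

noncomputable def offDiagPowerMean {n : ℕ} (R : Matrix (Fin n) (Fin n) ℝ) (p : ℝ) : ℝ :=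
  ((∑ i, ∑ j ∈ univ.erase i, |R i j| ^ p) / (n * (n - 1))) ^ (1 / p)

variable {n : ℕ} (R : Matrix (Fin n) (Fin n) ℝ)

theorem offDiagPowerMean_eq (p : ℝ) : offDiagPowerMean R p =
    ((∑ q ∈ univ.sigma fun i : Fin n => univ.erase i, |R q.1 q.2| ^ p) /
      #(univ.sigma fun i : Fin n => univ.erase i)) ^ (1 / p) := by
  rw [offDiagPowerMean, sum_sigma, card_sigma]
  rcases n with _ | n
  · simp
  simp [card_erase_of_mem]

theorem offDiagPowerMean_nonneg (p : ℝ) : 0 ≤ offDiagPowerMean R p := by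
  rw [offDiagPowerMean_eq]
  exact rpow_nonneg (div_nonneg (sum_nonneg fun _ _ => rpow_nonneg (abs_nonneg _) _)
    (Nat.cast_nonneg _)) _

theorem offDiagPowerMean_mono {p q : ℝ} (hp : 0 < p) (hpq : p ≤ q) :
    offDiagPowerMean R p ≤ offDiagPowerMean R q := by
  simp only [offDiagPowerMean_eq]
  exact rpow_mean_le_rpow_mean _ (fun _ _ => abs_nonneg _) hp hpq

theorem offDiagPowerMean_two_sq :
    offDiagPowerMean R 2 ^ 2 = (∑ i, ∑ j ∈ univ.erase i, R i j ^ 2) / (n * (n - 1)) := by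
  rw [offDiagPowerMean, ← sqrt_eq_rpow]
  simp only [rpow_two, sq_abs]
  exact sq_sqrt (div_nonneg (sum_nonneg fun _ _ => sum_nonneg fun _ _ => sq_nonneg _)
    (natCast_mul_sub_one_nonneg n))

variable {R}

theorem Matrix.IsHermitian.sum_eigenvalues_of_diag_eq_one (hR : R.IsHermitian)
    (hdiag : ∀ i, R i i = 1) : ∑ i, hR.eigenvalues i = n := by
  have := hR.trace_eq_sum_eigenvalues
  simp_all [trace]

theorem Matrix.IsHermitian.sum_sq_eigenvalues_of_diag_eq_one (hR : R.IsHermitian)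
    (hdiag : ∀ i, R i i = 1) :
    ∑ i, hR.eigenvalues i ^ 2 = n + ∑ i, ∑ j ∈ univ.erase i, R i j ^ 2 := by
  have htrace := hR.trace_pow_eq_sum_eigenvalues_pow 2
  simp only [RCLike.ofReal_real_eq_id, id] at htrace
  have hrow : ∀ i, (R ^ 2) i i = 1 + ∑ j ∈ univ.erase i, R i j ^ 2 := fun i => by
    rw [sq, mul_apply, ← add_sum_erase _ _ (mem_univ i), hdiag]
    simp only [fun j => (by simpa using hR.apply i j : R j i = R i j), sq, one_mul]
  rw [← htrace, trace]
  simp only [diag_apply, hrow, sum_add_distrib, sum_const, card_univ, Fintype.card_fin,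
    nsmul_eq_mul, mul_one]

theorem offDiagPowerMean_two_le_one (hR : R.PosSemidef) (hdiag : ∀ i, R i i = 1) :
    offDiagPowerMean R 2 ≤ 1 := by
  have hsq := sum_sq_le_sq_sum_of_nonneg (s := univ) fun i _ => hR.eigenvalues_nonneg i
  rw [hR.isHermitian.sum_eigenvalues_of_diag_eq_one hdiag,
    hR.isHermitian.sum_sq_eigenvalues_of_diag_eq_one hdiag] at hsq
  rw [← sq_le_one_iff₀ (offDiagPowerMean_nonneg R 2), offDiagPowerMean_two_sq]
  exact div_le_one_of_le₀ (by linarith) (natCast_mul_sub_one_nonneg n)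

theorem det_le_equicorrelationDet (hn : 2 ≤ n) (hR : R.PosSemidef) (hdiag : ∀ i, R i i = 1) :
    R.det ≤ equicorrelationDet n (offDiagPowerMean R 2) := by
  rw [hR.isHermitian.det_eq_prod_eigenvalues]
  simp only [RCLike.ofReal_real_eq_id, id]
  refine prod_le_equicorrelationDet hn hR.eigenvalues_nonneg (offDiagPowerMean_nonneg R 2)
    (hR.isHermitian.sum_eigenvalues_of_diag_eq_one hdiag) ?_
  rw [hR.isHermitian.sum_sq_eigenvalues_of_diag_eq_one hdiag, offDiagPowerMean_two_sq]
  have hn' : (2 : ℝ) ≤ n := by exact_mod_cast hn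
  rw [mul_div_cancel₀ _ (by nlinarith)]

end CorrelationMatrix

theorem det_le_f_rp (n : ℕ) (hn : 2 ≤ n) (R : Matrix (Fin n) (Fin n) ℝ)
    (hpsd : R.PosSemidef) (hdiag : ∀ i, R i i = 1)
    (p : ℝ) (hp1 : 1 < p) (hp2 : p ≤ 2)
    (rp : ℝ)
    (hrp : rp = ((∑ i, ∑ j ∈ Finset.univ.erase i, |R i j| ^ p) / (n * (n - 1))) ^ (1 / p)) :
    R.det ≤ (1 - rp) ^ (n - 1) * (1 + (n - 1 : ℝ) * rp) := by
  have hrp₂ : offDiagPowerMean R p ≤ offDiagPowerMean R 2 :=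
    offDiagPowerMean_mono R (by linarith) hp2
  have hr₂ := offDiagPowerMean_two_le_one hpsd hdiag
  subst hrp
  calc R.det ≤ equicorrelationDet n (offDiagPowerMean R 2) :=
        det_le_equicorrelationDet hn hpsd hdiag
    _ ≤ equicorrelationDet n (offDiagPowerMean R p) :=
        antitoneOn_equicorrelationDet n ⟨offDiagPowerMean_nonneg R p, hrp₂.trans hr₂⟩
          ⟨offDiagPowerMean_nonneg R 2, hr₂⟩ hrp₂
end
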